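/- Let X be a finite square-free left cycle set of multipermutational level k with an automorphism α such that σ_{[k-1]}(x) ≠ σ_{[k-1]}(α(x)) for some x. Define X₀ := X and X_m := X_{m-1} × ℤ/2ℤ with (x,s)·(y,t) := (x·y, t + (1 - δ_{x,y})), and Z_m := X_{m-1} ∪ {z} with x∘y = x·y for x,y ∈ X_{m-1}, x∘z = z, z∘(y₀,...,y_{m-1}) = (α(y₀), y₁,...,y_{m-1}). Then Z_m is a square-free left cycle set of multipermutational level k+m, of cardinality |X|·2^{m-1} + 1. -/

import Mathlib

/-- A left cycle set: each left multiplication `op x` is bijective and the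
cycloid identity `(x·y)·(x·z) = (y·x)·(y·z)` holds. -/
def IsCycleSet {X : Type*} (op : X → X → X) : Prop :=
  (∀ x, Function.Bijective (op x)) ∧
  ∀ x y z, op (op x y) (op x z) = op (op y x) (op y z)

/-- Square-free: `x·x = x` for all `x`. -/
def IsSquareFree {X : Type*} (op : X → X → X) : Prop := ∀ x, op x x = x

/-- Non-degenerate: the squaring map `x ↦ x·x` is bijective. -/
def IsNonDeg {X : Type*} (op : X → X → X) : Prop :=
  Function.Bijective (fun x => op x x)

/-- An automorphism of a left cycle set. -/
def IsAut {X : Type*} (op : X → X → X) (α : X → X) : Prop :=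
  Function.Bijective α ∧ ∀ x y, α (op x y) = op (α x) (α y)

/-- Irretractable: the map `x ↦ σ_x` is injective. -/
def IsIrretractable {X : Type*} (op : X → X → X) : Prop := Function.Injective op

/-- `retRel op n x y` says `σ_{[n]}(x) = σ_{[n]}(y)`, i.e. `x` and `y` have the same
image in the `n`-th retraction `σⁿ(X)`. -/
def retRel {X : Type*} (op : X → X → X) : ℕ → X → X → Prop
  | 0 => Eq
  | n + 1 => fun x y => ∀ z, retRel op n (op x z) (op y z)

/-- `X` has multipermutational level `m`: `m` is minimal with `|σᵐ(X)| = 1`. -/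
def HasMPL {X : Type*} (op : X → X → X) (m : ℕ) : Prop :=
  (∀ x y, retRel op m x y) ∧ ∀ k < m, ¬ (∀ x y, retRel op k x y)

/-- The solution `r(x,y) = (λ_x(y), λ_x(y)·x)` associated to a cycle set,
where `lam x` is the inverse of `op x`. -/
def rmap {X : Type*} (op lam : X → X → X) : X × X → X × X :=
  fun p => (lam p.1 p.2, op (lam p.1 p.2) p.1)

/-- `r × id`. -/
def r1map {X : Type*} (r : X × X → X × X) : X × X × X → X × X × X :=
  fun p => ((r (p.1, p.2.1)).1, ((r (p.1, p.2.1)).2, p.2.2))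

/-- `id × r`. -/
def r2map {X : Type*} (r : X × X → X × X) : X × X × X → X × X × X :=
  fun p => (p.1, r p.2)

/-- One-sided extension of a cycle set by an automorphism `α`, with `none` as the
new element `z`: `x∘y = x·y`, `x∘z = z`, `z∘y = α(y)`. -/
def extOp {X : Type*} (op : X → X → X) (α : X → X) :
    Option X → Option X → Option X
  | some x, some y => some (op x y)
  | _, none => none
  | none, some y => some (α y)

/-- The dynamical extension `X × ℤ/2ℤ` with `(x,s)·(y,t) = (x·y, t + 1 - δ_{x,y})`. -/
def doubleOp {X : Type*} [DecidableEq X] (op : X → X → X) :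
    X × ZMod 2 → X × ZMod 2 → X × ZMod 2 :=
  fun p q => (op p.1 q.1, if p.1 = q.1 then q.2 else q.2 + 1)

/-- The Bachiller–Cedó–Jespers–Okniński operation on `A × B × I`. -/
def bcjoOp {A B I : Type*} [AddCommGroup A] [AddCommGroup B] [DecidableEq I]
    (φ₁ : A → B) (φ₂ : B →+ A) : A × B × I → A × B × I → A × B × I :=
  fun p q =>
    if p.2.2 = q.2.2 then (q.1, q.2.1 - φ₁ (p.1 - q.1), q.2.2)
    else (q.1 - φ₂ p.2.1, q.2.1, q.2.2)

/-- One-sided extension of `X` by a cycle set `Y` acting by automorphisms: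
`x∘y = x·y` inside `X` and `Y`, `x∘y = y` for `x ∈ X, y ∈ Y`, `y∘x = α(y)(x)`. -/
def sumOp {X Y : Type*} (opX : X → X → X) (opY : Y → Y → Y) (α : Y → X → X) :
    X ⊕ Y → X ⊕ Y → X ⊕ Y
  | .inl p, .inl q => .inl (opX p q)
  | .inl _, .inr y => .inr y
  | .inr y, .inl q => .inl (α y q)
  | .inr y, .inr y' => .inr (opY y y')

/-- The set of cardinalities of finite square-free non-degenerate cycle sets of
multipermutational level `m`; `N_m` is its infimum. -/
def Nset (m : ℕ) : Set ℕ :=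
  {n | ∃ (X : Type) (op : X → X → X), Finite X ∧ IsCycleSet op ∧ IsSquareFree op ∧
        IsNonDeg op ∧ HasMPL op m ∧ Nat.card X = n}

/-- The set of cardinalities of finite square-free cycle sets of level `k` admitting
an automorphism `α` with `σ_{[k-1]}(x) ≠ σ_{[k-1]}(α(x))` for some `x`;
`N̄_k` is its infimum. -/
def NbarSet (k : ℕ) : Set ℕ :=
  {n | ∃ (X : Type) (op : X → X → X), Finite X ∧ IsCycleSet op ∧ IsSquareFree op ∧
        HasMPL op k ∧ (∃ (α : X → X) (x : X), IsAut op α ∧ ¬ retRel op (k - 1) x (α x)) ∧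
        Nat.card X = n}

/-- The iterated doubling `X_m := X_{m-1} × ℤ/2ℤ`. -/
def IterX (X : Type) : ℕ → Type
  | 0 => X
  | n + 1 => IterX X n × ZMod 2

instance instDecEqIterX {X : Type} [DecidableEq X] : ∀ n, DecidableEq (IterX X n)
  | 0 => inferInstanceAs (DecidableEq X)
  | n + 1 => letI := instDecEqIterX (X := X) n; inferInstanceAs (DecidableEq (IterX X n × ZMod 2))

/-- The iterated operation `(x,s)·(y,t) := (x·y, t + 1 - δ_{x,y})`. -/
def iterOp {X : Type} [DecidableEq X] (op : X → X → X) :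
    ∀ n, IterX X n → IterX X n → IterX X n
  | 0 => op
  | n + 1 => fun p q =>
      (iterOp op n p.1 q.1, if p.1 = q.1 then q.2 else q.2 + 1)

/-- The lift `(y₀, y₁, …, y_{m-1}) ↦ (α(y₀), y₁, …, y_{m-1})` of `α` to `X_m`. -/
def iterAut {X : Type} (α : X → X) : ∀ n, IterX X n → IterX X n
  | 0 => α
  | n + 1 => fun p => (iterAut α n p.1, p.2)


/-!
Two elements `(x, s), (y, t)` of the doubling `X × ℤ/2ℤ` act identically iff `x = y`, and more
generally they agree in the `(n+1)`-st retraction iff `x, y` agree in the `n`-th one; so doubling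
raises the level by exactly one, and `α × id` is again an automorphism with the same defect.
In the extension by `z`, an element `x` agrees with `z` in the `(n+1)`-st retraction iff
`σ_x ≡ α` modulo the `n`-th one; evaluating at `x`, where `σ_x(x) = x` by square-freeness, the
defect of `α` separates `x` from `z` at level `k`, so adjoining `z` raises the level once more.
-/

section Retraction

variable {X : Type*} {op : X → X → X}

lemma retRel_refl (op : X → X → X) : ∀ (n : ℕ) (x : X), retRel op n x x
  | 0, _ => rfl
  | n + 1, _ => fun _ => retRel_refl op n _

lemma retRel_succ_of_retRel : ∀ {n : ℕ} {x y : X}, retRel op n x y → retRel op (n + 1) x y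
  | 0, _, _, rfl => fun _ => rfl
  | _ + 1, _, _, h => fun z => retRel_succ_of_retRel (h z)

lemma retRel_of_le {n m : ℕ} (hnm : n ≤ m) {x y : X} (h : retRel op n x y) :
    retRel op m x y := by
  induction hnm with
  | refl => exact h
  | step _ ih => exact retRel_succ_of_retRel ih

lemma HasMPL.of_forall_of_not_forall {n : ℕ} (hall : ∀ x y, retRel op (n + 1) x y)
    (hnot : ¬ ∀ x y, retRel op n x y) : HasMPL op (n + 1) :=
  ⟨hall, fun _ hj H => hnot fun x y => retRel_of_le (Nat.le_of_lt_succ hj) (H x y)⟩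

end Retraction

section Doubling

variable {X : Type*} [DecidableEq X] {op : X → X → X}

lemma retRel_doubleOp_succ_iff : ∀ (n : ℕ) (p q : X × ZMod 2),
    retRel (doubleOp op) (n + 1) p q ↔ retRel op n p.1 q.1
  | 0, p, q => by
    refine ⟨fun h => ?_, fun h z => show doubleOp op p z = doubleOp op q z by
      simp [doubleOp, show p.1 = q.1 from h]⟩
    have hp : doubleOp op p (p.1, 0) = doubleOp op q (p.1, 0) := h (p.1, 0)
    by_contra hne
    simp [doubleOp, Ne.symm hne] at hp
  | n + 1, p, q =>
    ⟨fun h c => (retRel_doubleOp_succ_iff n _ _).1 (h (c, 0)),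
      fun h z => (retRel_doubleOp_succ_iff n _ _).2 (h z.1)⟩

lemma IsCycleSet.doubleOp (h : IsCycleSet op) : IsCycleSet (doubleOp op) := by
  refine ⟨fun p => ⟨fun q r hqr => ?_, fun r => ?_⟩, fun p q r => ?_⟩
  · have hq : q.1 = r.1 := (h.1 p.1).1 (congrArg Prod.fst hqr)
    have hs := congrArg Prod.snd hqr
    simp only [_root_.doubleOp, hq] at hs
    exact Prod.ext hq (by split_ifs at hs <;> simpa using hs)
  · obtain ⟨b, hb⟩ := (h.1 p.1).2 r.1
    refine ⟨(b, if p.1 = b then r.2 else r.2 + 1), Prod.ext hb ?_⟩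
    have h2 : (1 : ZMod 2) + 1 = 0 := rfl
    by_cases hpb : p.1 = b <;> simp [_root_.doubleOp, hpb, add_assoc, h2]
  · -- both second coordinates equal `r.2 + [p.1 ≠ r.1] + [q.1 ≠ r.1]`
    simp only [_root_.doubleOp, (h.1 p.1).1.eq_iff, (h.1 q.1).1.eq_iff, h.2 p.1 q.1 r.1]
    by_cases hq : q.1 = r.1 <;> by_cases hp : p.1 = r.1 <;> simp [hq, hp]

lemma IsSquareFree.doubleOp (h : IsSquareFree op) : IsSquareFree (doubleOp op) := fun p => by
  simp [_root_.doubleOp, h p.1]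

lemma IsAut.doubleOp {α : X → X} (hα : IsAut op α) :
    IsAut (doubleOp op) (Prod.map α id) := by
  refine ⟨hα.1.prodMap Function.bijective_id, fun p q => ?_⟩
  simp [_root_.doubleOp, hα.2, hα.1.1.eq_iff]

lemma HasMPL.doubleOp {n : ℕ} (h : HasMPL op (n + 1)) : HasMPL (doubleOp op) (n + 2) :=
  .of_forall_of_not_forall (fun p q => (retRel_doubleOp_succ_iff _ p q).2 (h.1 _ _))
    fun H => h.2 n n.lt_succ_self fun x y => (retRel_doubleOp_succ_iff n (x, 0) (y, 0)).1 (H _ _)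

end Doubling

section Extension

variable {X : Type*} {op : X → X → X} {α : X → X}

lemma retRel_extOp_some_iff : ∀ (n : ℕ) (a b : X),
    retRel (extOp op α) n (some a) (some b) ↔ retRel op n a b
  | 0, _, _ => Option.some_inj
  | n + 1, _, _ =>
    ⟨fun h c => (retRel_extOp_some_iff n _ _).1 (h (some c)), fun h z =>
      match z with
      | some c => (retRel_extOp_some_iff n _ _).2 (h c)
      | none => retRel_refl _ n none⟩

lemma IsCycleSet.extOp (h : IsCycleSet op) (hα : IsAut op α) : IsCycleSet (extOp op α) := by
  have hbij : ∀ p, Function.Bijective (_root_.extOp op α p) := by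
    intro p
    have hf : Function.Bijective (p.elim α op) := by cases p <;> simp [h.1, hα.1]
    have hmap : _root_.extOp op α p = Option.map (p.elim α op) := by
      funext q
      cases p <;> cases q <;> rfl
    refine hmap ▸ ⟨Option.map_injective hf.1, fun q => ?_⟩
    rcases q with _ | c
    · exact ⟨none, rfl⟩
    · obtain ⟨b, rfl⟩ := hf.2 c
      exact ⟨some b, rfl⟩
  refine ⟨hbij, fun p q r => ?_⟩
  rcases p with _ | a <;> rcases q with _ | b <;> rcases r with _ | c <;>
    simp [_root_.extOp, h.2, hα.2]

lemma IsSquareFree.extOp (h : IsSquareFree op) : IsSquareFree (extOp op α)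
  | some a => congrArg some (h a)
  | none => rfl

lemma HasMPL.extOp {n : ℕ} (h : HasMPL op (n + 1)) (hsf : IsSquareFree op) {x : X}
    (hx : ¬ retRel op n x (α x)) : HasMPL (extOp op α) (n + 2) := by
  refine .of_forall_of_not_forall (fun p q z => ?_) fun H => hx ?_
  · cases z with
    | none => cases p <;> cases q <;> exact retRel_refl _ _ none
    | some c =>
      cases p <;> cases q <;>
        exact (retRel_extOp_some_iff _ _ _).2 (h.1 _ _)
  · have hxz := (retRel_extOp_some_iff n _ _).1 (H (some x) none (some x))
    rwa [hsf x] at hxz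

end Extension

section Iteration

variable {X : Type}

instance IterX.finite [Finite X] : ∀ n, Finite (IterX X n)
  | 0 => ‹Finite X›
  | n + 1 => haveI := IterX.finite n; inferInstanceAs (Finite (IterX X n × ZMod 2))

lemma natCard_iterX [Finite X] : ∀ n, Nat.card (IterX X n) = Nat.card X * 2 ^ n
  | 0 => by simp [IterX]
  | n + 1 => by
    rw [pow_succ, ← mul_assoc, ← natCard_iterX n, ← Nat.card_zmod 2]
    exact Nat.card_prod _ _

variable [DecidableEq X] {op : X → X → X} {α : X → X}

lemma IsCycleSet.iterOp (h : IsCycleSet op) : ∀ n, IsCycleSet (iterOp op n)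
  | 0 => h
  | n + 1 => (h.iterOp n).doubleOp

lemma IsSquareFree.iterOp (h : IsSquareFree op) : ∀ n, IsSquareFree (iterOp op n)
  | 0 => h
  | n + 1 => (h.iterOp n).doubleOp

lemma IsAut.iterOp (hα : IsAut op α) : ∀ n, IsAut (iterOp op n) (iterAut α n)
  | 0 => hα
  | n + 1 => (hα.iterOp n).doubleOp

lemma HasMPL.iterOp {k : ℕ} (h : HasMPL op (k + 1)) : ∀ n, HasMPL (iterOp op n) (k + n + 1)
  | 0 => h
  | n + 1 => (h.iterOp n).doubleOp

lemma exists_not_retRel_iterAut {k : ℕ} {x : X} (hx : ¬ retRel op k x (α x)) :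
    ∀ n, ∃ y, ¬ retRel (iterOp op n) (k + n) y (iterAut α n y)
  | 0 => ⟨x, hx⟩
  | n + 1 => by
    obtain ⟨y, hy⟩ := exists_not_retRel_iterAut hx n
    exact ⟨(y, 0), fun H => hy ((retRel_doubleOp_succ_iff _ _ _).1 H)⟩

end Iteration

/-- `Z_m = X_{m-1} ∪ {z}` is a square-free cycle set of
multipermutational level `k + m` and cardinality `|X|·2^{m-1} + 1`. -/
theorem stmt8 {X : Type} [Finite X] [DecidableEq X] (op : X → X → X) (k : ℕ)
    (h : IsCycleSet op) (hsf : IsSquareFree op) (hmpl : HasMPL op k)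
    (α : X → X) (hα : IsAut op α) (x : X) (hx : ¬ retRel op (k - 1) x (α x))
    (m : ℕ) (hm : 1 ≤ m) :
    IsCycleSet (extOp (iterOp op (m - 1)) (iterAut α (m - 1))) ∧
    IsSquareFree (extOp (iterOp op (m - 1)) (iterAut α (m - 1))) ∧
    HasMPL (extOp (iterOp op (m - 1)) (iterAut α (m - 1))) (k + m) ∧
    Nat.card (Option (IterX X (m - 1))) = Nat.card X * 2 ^ (m - 1) + 1 := by
  obtain ⟨j, rfl⟩ : ∃ j, k = j + 1 := by
    refine Nat.exists_eq_succ_of_ne_zero fun hk => hx ?_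
    subst hk
    exact hmpl.1 x (α x)
  obtain ⟨n, rfl⟩ : ∃ n, m = n + 1 := ⟨m - 1, by omega⟩
  simp only [Nat.add_sub_cancel] at hx ⊢
  obtain ⟨y, hy⟩ := exists_not_retRel_iterAut hx n
  refine ⟨(h.iterOp n).extOp (hα.iterOp n), (hsf.iterOp n).extOp, ?_, ?_⟩
  · rw [show j + 1 + (n + 1) = j + n + 2 by omega]
    exact (hmpl.iterOp n).extOp (hsf.iterOp n) hy
  · rw [Finite.card_option, natCard_iterX]
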